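/- arXiv:0809.0141 — 7 statements merged into one kernel-verified Lean document; each statement's English description precedes it below -/
import Mathlib

section
/- Fix an integer t ≥ 1 and let R_t(r) := Σ_{i=0}^t r^i/i!. Then the function r ↦ r·R_t'(r)/R_t(r) is strictly increasing on (0,∞); for each y ∈ (0,t) there is a unique positive solution r_0 = r_0(y) of r·R_t'(r)/R_t(r) = y; the map y ↦ r_0(y) is a continuous bijection from (0,t) onto (0,∞); and s(y) := r_0(y) · (d/dx)[x·R_t'(x)/R_t(x)] evaluated at x = r_0(y) satisfies s(y) > 0 for every y ∈ (0,t). -/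
open Filter Asymptotics Set

/-- `R_t(r) = Σ_{i=0}^t r^i / i!`. -/
noncomputable def Rt (t : ℕ) (r : ℝ) : ℝ :=
  ∑ i ∈ Finset.range (t + 1), r ^ i / (i.factorial : ℝ)

/-- `F_t(r) = r · R_t'(r) / R_t(r)`. -/
noncomputable def Ft (t : ℕ) (r : ℝ) : ℝ := r * deriv (Rt t) r / Rt t r

/-! With weights `w i = r ^ i / i !` (`i ≤ t`) and moments `M k = ∑ i ^ k * w i`, the operator
`r · d/dr` sends `M k` to `M (k + 1)`. Hence `Ft t = M 1 / M 0` is the mean of the truncated Poisson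
law with these weights and `r * (Ft t)' r = (M 0 * M 2 - M 1 ^ 2) / M 0 ^ 2` is its variance, which
is positive by the strict Cauchy–Schwarz inequality because the indices `0` and `1` both carry
weight. So `Ft t` is strictly increasing on `(0, ∞)`; it tends to `0` at `0⁺` and to `t` at `∞`
(compare the leading terms `r ^ t`), hence maps `(0, ∞)` bijectively onto `(0, t)`, and its inverse
is monotone with open image, hence continuous. -/

open Finset Function Topology
open scoped Nat

theorem Finset.sq_sum_mul_lt_sum_mul_sum_sq {ι : Type*} (s : Finset ι) {w f : ι → ℝ}
    (hw : ∀ i ∈ s, 0 ≤ w i) {i j : ι} (hi : i ∈ s) (hj : j ∈ s) (hwi : 0 < w i) (hwj : 0 < w j)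
    (hfij : f i ≠ f j) :
    (∑ k ∈ s, f k * w k) ^ 2 < (∑ k ∈ s, w k) * ∑ k ∈ s, f k ^ 2 * w k := by
  have lagrange : ∑ a ∈ s, ∑ b ∈ s, w a * w b * (f a - f b) ^ 2
      = 2 * ((∑ k ∈ s, w k) * (∑ k ∈ s, f k ^ 2 * w k) - (∑ k ∈ s, f k * w k) ^ 2) := by
    simp only [show ∀ a b, w a * w b * (f a - f b) ^ 2
        = w a * (f b ^ 2 * w b) + f a ^ 2 * w a * w b - 2 * (f a * w a) * (f b * w b) from
      fun a b => by ring, sum_add_distrib, sum_sub_distrib, ← mul_sum, ← sum_mul]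
    ring
  have hterm_nonneg : ∀ a ∈ s, ∀ b ∈ s, 0 ≤ w a * w b * (f a - f b) ^ 2 := fun a ha b hb => by
    have := hw a ha; have := hw b hb; positivity
  have hterm_pos : 0 < w i * w j * (f i - f j) ^ 2 := by
    have := sub_ne_zero.2 hfij; positivity
  have hterm_le : w i * w j * (f i - f j) ^ 2 ≤ ∑ a ∈ s, ∑ b ∈ s, w a * w b * (f a - f b) ^ 2 :=
    calc w i * w j * (f i - f j) ^ 2 ≤ ∑ b ∈ s, w i * w b * (f i - f b) ^ 2 :=
          single_le_sum (hterm_nonneg i hi) hj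
      _ ≤ _ := single_le_sum (fun a ha => sum_nonneg (hterm_nonneg a ha)) hi
  linarith

noncomputable def truncMoment (t k : ℕ) (r : ℝ) : ℝ :=
  ∑ i ∈ range (t + 1), (i : ℝ) ^ k * (r ^ i / i !)

lemma Rt_eq_truncMoment_zero (t : ℕ) : Rt t = truncMoment t 0 := by
  ext r
  simp [Rt, truncMoment]

lemma differentiable_truncMoment (t k : ℕ) : Differentiable ℝ (truncMoment t k) := by
  unfold truncMoment
  fun_prop

lemma mul_deriv_truncMoment (t k : ℕ) (r : ℝ) :
    r * deriv (truncMoment t k) r = truncMoment t (k + 1) r := by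
  have hderiv : HasDerivAt (truncMoment t k)
      (∑ i ∈ range (t + 1), (i : ℝ) ^ k * ((i * r ^ (i - 1)) / i !)) r :=
    HasDerivAt.fun_sum fun i _ => ((hasDerivAt_pow i r).div_const _).const_mul _
  rw [hderiv.deriv, truncMoment, mul_sum]
  refine sum_congr rfl fun i _ => ?_
  rcases i with _ | i
  · simp
  · push_cast
    ring

lemma truncMoment_zero_pos (t : ℕ) {r : ℝ} (hr : 0 ≤ r) : 0 < truncMoment t 0 r :=
  sum_pos' (fun i _ => by positivity) ⟨0, by simp⟩

lemma Ft_eq_div (t : ℕ) : Ft t = fun r => truncMoment t 1 r / truncMoment t 0 r := by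
  ext r
  rw [Ft, Rt_eq_truncMoment_zero, mul_deriv_truncMoment]

lemma continuousOn_Ft (t : ℕ) : ContinuousOn (Ft t) (Ici 0) := by
  rw [Ft_eq_div]
  exact (differentiable_truncMoment t 1).continuous.continuousOn.div
    (differentiable_truncMoment t 0).continuous.continuousOn
    fun r hr => (truncMoment_zero_pos t hr).ne'

lemma mul_deriv_Ft (t : ℕ) {r : ℝ} (hr : 0 ≤ r) :
    r * deriv (Ft t) r =
      (truncMoment t 0 r * truncMoment t 2 r - truncMoment t 1 r ^ 2) / truncMoment t 0 r ^ 2 := by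
  rw [Ft_eq_div, deriv_fun_div (differentiable_truncMoment t 1 r)
    (differentiable_truncMoment t 0 r) (truncMoment_zero_pos t hr).ne',
    ← mul_deriv_truncMoment t 1, ← mul_deriv_truncMoment t 0]
  ring

lemma sq_truncMoment_one_lt {t : ℕ} (ht : 1 ≤ t) {r : ℝ} (hr : 0 < r) :
    truncMoment t 1 r ^ 2 < truncMoment t 0 r * truncMoment t 2 r := by
  simpa [truncMoment] using sq_sum_mul_lt_sum_mul_sum_sq (range (t + 1))
    (w := fun i => r ^ i / i !) (f := fun i => (i : ℝ)) (fun i _ => by positivity)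
    (i := 0) (j := 1) (by simp) (mem_range.2 (by omega)) (by simp) (by simpa using hr) (by simp)

lemma mul_deriv_Ft_pos {t : ℕ} (ht : 1 ≤ t) {r : ℝ} (hr : 0 < r) : 0 < r * deriv (Ft t) r := by
  rw [mul_deriv_Ft t hr.le]
  have := truncMoment_zero_pos t hr.le
  exact div_pos (sub_pos.2 (sq_truncMoment_one_lt ht hr)) (by positivity)

lemma strictMonoOn_Ft {t : ℕ} (ht : 1 ≤ t) : StrictMonoOn (Ft t) (Ioi 0) := by
  refine strictMonoOn_of_deriv_pos (convex_Ioi 0) ((continuousOn_Ft t).mono Ioi_subset_Ici_self)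
    fun r hr => ?_
  rw [interior_Ioi] at hr
  exact pos_of_mul_pos_right (mul_deriv_Ft_pos ht hr) hr.le

lemma mapsTo_Ft {t : ℕ} (ht : 1 ≤ t) : MapsTo (Ft t) (Ioi 0) (Ioo 0 t) := by
  intro r (hr : 0 < r)
  rw [Ft_eq_div]
  have hM0 := truncMoment_zero_pos t hr.le
  have hM1 : 0 < truncMoment t 1 r :=
    sum_pos' (fun i _ => by positivity) ⟨1, mem_range.2 (by omega), by simpa⟩
  refine ⟨div_pos hM1 hM0, ?_⟩
  rw [div_lt_iff₀ hM0, truncMoment, truncMoment, mul_sum, ← sub_pos, ← sum_sub_distrib]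
  refine sum_pos' (fun i hi => ?_) ⟨0, by simp, by simpa using Nat.lt_of_succ_le ht⟩
  have hit : (i : ℝ) ≤ t := by exact_mod_cast Nat.lt_succ_iff.1 (mem_range.1 hi)
  have hwi : 0 ≤ r ^ i / i ! := by positivity
  nlinarith

lemma tendsto_Ft_nhdsGT_zero (t : ℕ) : Tendsto (Ft t) (𝓝[>] 0) (𝓝 0) := by
  have h := ((continuousOn_Ft t) 0 self_mem_Ici).mono Ioi_subset_Ici_self
  simpa [Ft] using h.tendsto

lemma tendsto_truncMoment_div_pow_atTop (t k : ℕ) :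
    Tendsto (fun r => truncMoment t k r / r ^ t) atTop (𝓝 ((t : ℝ) ^ k / t !)) := by
  have hlow : ∀ i ∈ range t,
      Tendsto (fun r : ℝ => (i : ℝ) ^ k / i ! * (r ^ i / r ^ t)) atTop (𝓝 0) := fun i hi => by
    simpa using (tendsto_pow_div_pow_atTop_zero (mem_range.1 hi)).const_mul ((i : ℝ) ^ k / i !)
  have htop : (fun _ => (t : ℝ) ^ k / t !)
      =ᶠ[atTop] fun r : ℝ => (t : ℝ) ^ k / t ! * (r ^ t / r ^ t) :=
    (eventually_ne_atTop 0).mono fun r hr => by simp only [div_self (pow_ne_zero t hr), mul_one]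
  have := (tendsto_finsetSum _ hlow).add (tendsto_const_nhds.congr' htop)
  rw [sum_const_zero, zero_add] at this
  refine this.congr fun r => ?_
  rw [truncMoment, sum_range_succ, add_div, sum_div]
  congr 1
  · exact sum_congr rfl fun i _ => by ring
  · ring

lemma tendsto_Ft_atTop (t : ℕ) : Tendsto (Ft t) atTop (𝓝 t) := by
  have h := (tendsto_truncMoment_div_pow_atTop t 1).div (tendsto_truncMoment_div_pow_atTop t 0)
    (by positivity)
  have hlim : (t : ℝ) ^ 1 / t ! / ((t : ℝ) ^ 0 / t !) = t := by field_simp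
  rw [hlim] at h
  refine h.congr' ((eventually_ne_atTop 0).mono fun r hr => ?_)
  rw [Ft_eq_div, Pi.div_apply, div_div_div_cancel_right₀ (pow_ne_zero t hr)]

lemma surjOn_Ft (t : ℕ) : SurjOn (Ft t) (Ioi 0) (Ioo 0 t) :=
  isPreconnected_Ioi.intermediate_value_Ioo (l₁ := 𝓝[>] 0) inf_le_right
    (le_principal_iff.2 (Ioi_mem_atTop 0)) ((continuousOn_Ft t).mono Ioi_subset_Ici_self)
    (tendsto_Ft_nhdsGT_zero t) (tendsto_Ft_atTop t)

lemma StrictMonoOn.continuousOn_of_rightInvOn {α β : Type*} [LinearOrder α] [TopologicalSpace α]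
    [OrderTopology α] [DenselyOrdered α] [LinearOrder β] [TopologicalSpace β] [OrderTopology β]
    {f : α → β} {g : β → α} {s : Set α} {u : Set β} (hf : StrictMonoOn f s) (hg : BijOn g u s)
    (hfg : RightInvOn g f u) (hs : IsOpen s) (hu : IsOpen u) : ContinuousOn g u := by
  have hmono : MonotoneOn g u := fun y hy y' hy' hyy' =>
    (hf.le_iff_le (hg.mapsTo hy) (hg.mapsTo hy')).1 (by rwa [hfg hy, hfg hy'])
  refine fun y hy => (continuousAt_of_monotoneOn_of_image_mem_nhds hmono (hu.mem_nhds hy) ?_)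
    |>.continuousWithinAt
  rw [hg.image_eq]
  exact hs.mem_nhds (hg.mapsTo hy)

theorem stmt4 (t : ℕ) (ht : 1 ≤ t) :
    StrictMonoOn (Ft t) (Set.Ioi 0) ∧
    ∃ r0 : ℝ → ℝ,
      (∀ y ∈ Set.Ioo (0 : ℝ) t,
        r0 y ∈ Set.Ioi (0 : ℝ) ∧ Ft t (r0 y) = y ∧
          ∀ r ∈ Set.Ioi (0 : ℝ), Ft t r = y → r = r0 y) ∧
      ContinuousOn r0 (Set.Ioo (0 : ℝ) t) ∧
      Set.BijOn r0 (Set.Ioo (0 : ℝ) t) (Set.Ioi 0) ∧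
      ∀ y ∈ Set.Ioo (0 : ℝ) t, 0 < r0 y * deriv (Ft t) (r0 y) := by
  have hFt : BijOn (Ft t) (Ioi 0) (Ioo 0 t) :=
    ⟨mapsTo_Ft ht, (strictMonoOn_Ft ht).injOn, surjOn_Ft t⟩
  set r0 := invFunOn (Ft t) (Ioi 0)
  have hinv : InvOn r0 (Ft t) (Ioi 0) (Ioo 0 t) := hFt.invOn_invFunOn
  have hr0 : BijOn r0 (Ioo 0 t) (Ioi 0) := hFt.symm hinv.symm
  refine ⟨strictMonoOn_Ft ht, r0, fun y hy => ⟨hr0.mapsTo hy, hinv.2 hy, fun r hr hry => ?_⟩,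
    (strictMonoOn_Ft ht).continuousOn_of_rightInvOn hr0 hinv.2 isOpen_Ioi isOpen_Ioo, hr0,
    fun y hy => mul_deriv_Ft_pos ht (hr0.mapsTo hy)⟩
  rw [← hry, hinv.1 hr]
end

section
/- Fix an integer t ≥ 1, let R_t(r) = Σ_{i=0}^t r^i/i!, and for y ∈ (0,t) let r_0(y) be the unique positive solution of r·R_t'(r)/R_t(r) = y. Then as y → t from below, r_0(y) = t/(t−y) + O(1); that is, the quantity r_0(y) − t/(t−y) remains bounded as y ↑ t. -/
open Filter Asymptotics Set

/-!
Put `D_t(r) = t R_t(r) - r R_t'(r) = Σ_{i ≤ t} (t - i) r^i / i!`. If `F_t(r) = y`, then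
`(t - y) R_t(r) = D_t(r)`, hence `r - t / (t - y) = (r D_t(r) - t R_t(r)) / D_t(r)`. Shifting the
index in `r D_t(r)` shows that `r D_t - t R_t = Σ_{i ≤ t} (i - 1)(t - i) r^i / i!`, whose
coefficients are bounded in absolute value by `t` times those of `D_t`; so for `r ≥ 0` the
difference `r - t / (t - y)` lies in `[-t, t]`.
-/

open Finset Nat

noncomputable def Dt (t : ℕ) (r : ℝ) : ℝ :=
  ∑ i ∈ range (t + 1), ((t : ℝ) - i) * r ^ i / (i ! : ℝ)

noncomputable def Pt (t : ℕ) (r : ℝ) : ℝ :=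
  ∑ i ∈ range (t + 1), ((i : ℝ) - 1) * ((t : ℝ) - i) * r ^ i / (i ! : ℝ)

section

variable (t : ℕ) {r : ℝ}

lemma Rt_pos (hr : 0 ≤ r) : 0 < Rt t r :=
  sum_pos' (fun i _ => by positivity) ⟨0, by simp, by simp⟩

lemma mul_pow_div_factorial (i : ℕ) (r : ℝ) :
    r * (r ^ i / (i ! : ℝ)) = (i + 1 : ℝ) * r ^ (i + 1) / ((i + 1) ! : ℝ) := by
  push_cast [factorial_succ]
  field_simp
  ring

variable (r)

lemma mul_deriv_Rt : r * deriv (Rt t) r = ∑ i ∈ range (t + 1), (i : ℝ) * r ^ i / (i ! : ℝ) := by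
  have h : HasDerivAt (Rt t) (∑ i ∈ range (t + 1), (i : ℝ) * r ^ (i - 1) / (i ! : ℝ)) r :=
    HasDerivAt.fun_sum fun i _ => (hasDerivAt_pow i r).div_const _
  rw [h.deriv, mul_sum]
  refine sum_congr rfl fun i _ => ?_
  cases i with
  | zero => simp
  | succ k => rw [Nat.add_sub_cancel, pow_succ]; ring

lemma mul_Rt_sub_mul_deriv_Rt : t * Rt t r - r * deriv (Rt t) r = Dt t r := by
  rw [mul_deriv_Rt, Rt, Dt, mul_sum, ← sum_sub_distrib]
  exact sum_congr rfl fun i _ => by ring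

lemma mul_Dt_sub_mul_Rt : r * Dt t r - t * Rt t r = Pt t r := by
  set f : ℕ → ℝ := fun j => (j : ℝ) * (t - j + 1) * r ^ j / (j ! : ℝ) with hf
  have shift : r * Dt t r = ∑ j ∈ range (t + 1), f j :=
    calc r * Dt t r = ∑ i ∈ range (t + 1), f (i + 1) := by
          rw [Dt, mul_sum]
          refine sum_congr rfl fun i _ => ?_
          rw [hf, mul_div_assoc, mul_left_comm, mul_pow_div_factorial]
          push_cast
          ring
      _ = ∑ j ∈ range (t + 2), f j := by rw [sum_range_succ' f (t + 1)]; simp [hf]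
      _ = ∑ j ∈ range (t + 1), f j := by rw [sum_range_succ f (t + 1)]; simp [hf]
  rw [shift, Rt, Pt, mul_sum, ← sum_sub_distrib]
  exact sum_congr rfl fun i _ => by ring

variable {r}

lemma abs_Pt_le (hr : 0 ≤ r) : |Pt t r| ≤ t * Dt t r := by
  rw [Pt, Dt, mul_sum]
  refine (abs_sum_le_sum_abs _ _).trans (sum_le_sum fun i hi => ?_)
  have hit : (i : ℝ) ≤ t := by exact_mod_cast Nat.lt_succ_iff.1 (mem_range.1 hi)
  have hcoef : |((i : ℝ) - 1) * (t - i)| ≤ t * (t - i) := by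
    rw [abs_le]
    constructor
    · rcases Nat.eq_zero_or_pos i with rfl | hi0
      · rcases Nat.eq_zero_or_pos t with rfl | ht0
        · simp
        · have : (1 : ℝ) ≤ t := by exact_mod_cast ht0
          simp only [CharP.cast_eq_zero]
          nlinarith
      · have : (1 : ℝ) ≤ i := by exact_mod_cast hi0
        nlinarith
    · nlinarith
  rw [mul_div_assoc, abs_mul, abs_of_nonneg (by positivity : 0 ≤ r ^ i / (i ! : ℝ)), mul_div_assoc,
    ← mul_assoc]
  exact mul_le_mul_of_nonneg_right hcoef (by positivity)

lemma sub_mul_Rt_eq_Dt_of_Ft_eq {y : ℝ} (hr : 0 ≤ r) (h : Ft t r = y) :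
    (t - y) * Rt t r = Dt t r := by
  rw [← h, Ft, sub_mul, div_mul_cancel₀ _ (Rt_pos t hr).ne', mul_Rt_sub_mul_deriv_Rt]

lemma abs_sub_div_sub_le_of_Ft_eq {y : ℝ} (hr : 0 ≤ r) (h : Ft t r = y) (hy : y < t) :
    |r - t / (t - y)| ≤ t := by
  have hD := sub_mul_Rt_eq_Dt_of_Ft_eq t hr h
  have hDpos : 0 < Dt t r := hD ▸ mul_pos (sub_pos.2 hy) (Rt_pos t hr)
  have hdiff : r - t / (t - y) = Pt t r / Dt t r := by
    rw [← mul_Dt_sub_mul_Rt, eq_div_iff hDpos.ne', ← hD]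
    field_simp [(sub_pos.2 hy).ne']
  rw [hdiff, abs_div, abs_of_pos hDpos, div_le_iff₀ hDpos]
  exact abs_Pt_le t hr

end

theorem stmt6 (t : ℕ) (ht : 1 ≤ t) (r0 : ℝ → ℝ)
    (hr0 : ∀ y ∈ Set.Ioo (0 : ℝ) t, 0 < r0 y ∧ Ft t (r0 y) = y) :
    (fun y : ℝ => r0 y - (t : ℝ) / ((t : ℝ) - y))
      =O[nhdsWithin (t : ℝ) (Set.Iio (t : ℝ))] (fun _ : ℝ => (1 : ℝ)) := by
  refine isBigO_iff.2 ⟨t, ?_⟩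
  filter_upwards [Ioo_mem_nhdsLT (by exact_mod_cast ht : (0 : ℝ) < t)] with y hy
  obtain ⟨hpos, hF⟩ := hr0 y hy
  simpa using abs_sub_div_sub_le_of_Ft_eq t hpos.le hF hy.2
end

section
/- Fix a real number p with 0 < p < 1 and an integer t ≥ 0, and set b := 1/(1−p). Let A and B be two k-element subsets of the vertex set of G_{n,p} with |A ∩ B| = ℓ. Then P( A is t-stable | B is t-stable ) ≤ b^{C(ℓ,2)} · P( A is t-stable ); consequently P( A and B are both t-stable ) ≤ b^{C(ℓ,2)} · P( A is t-stable )^2. -/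
open MeasureTheory Filter Asymptotics

noncomputable def bernMeasure (p : ℝ) : Measure Bool :=
  ENNReal.ofReal p • Measure.dirac true + ENNReal.ofReal (1 - p) • Measure.dirac false

instance (p : ℝ) : IsFiniteMeasure (bernMeasure p) := by
  constructor
  simp only [bernMeasure, Measure.add_apply, Measure.smul_apply, smul_eq_mul,
    Measure.dirac_apply, Set.mem_univ, Set.indicator_of_mem, Pi.one_apply, mul_one]
  exact ENNReal.add_lt_top.2 ⟨ENNReal.ofReal_lt_top, ENNReal.ofReal_lt_top⟩

/-- The Erdős–Rényi random graph measure: a random boolean indicator for each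
unordered pair of vertices, each `true` with probability `p` independently. -/
noncomputable def gnp (n : ℕ) (p : ℝ) : Measure (Sym2 (Fin n) → Bool) :=
  Measure.pi fun _ => bernMeasure p

/-- The graph associated with an outcome of `gnp`. -/
def graphOf {n : ℕ} (ω : Sym2 (Fin n) → Bool) : SimpleGraph (Fin n) :=
  SimpleGraph.fromRel (fun i j => ω s(i, j) = true)

/-- `S` is a `t`-stable set in `G`: every vertex of `S` has at most `t`
neighbours inside `S`, i.e. the induced subgraph has maximum degree at most `t`. -/
def IsTStable {V : Type*} (G : SimpleGraph V) (t : ℕ) (S : Finset V) : Prop :=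
  ∀ v ∈ S, ({u | u ∈ S ∧ G.Adj v u}).ncard ≤ t

/-- The `t`-stability number: the maximum order of a `t`-stable set. -/
noncomputable def tStabNum {n : ℕ} (G : SimpleGraph (Fin n)) (t : ℕ) : ℕ :=
  sSup {k | ∃ S : Finset (Fin n), IsTStable G t S ∧ S.card = k}

/-!
Let `E` and `F` be the events that `A` and `B` are `t`-stable. Both are decreasing, and each
depends only on the pairs inside its own set. Deleting the `C(ℓ,2)` pairs inside `A ∩ B` turns `E`
into a larger event `E₀` that depends only on pairs inside `A` but not inside `B`, so `E₀` is
independent of `F`. On the other hand `E₀` intersected with "no pair inside `A ∩ B` is an edge"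
lies in `E`, and these two events are independent too, so `(1-p)^C(ℓ,2) P(E₀) ≤ P(E)`. Hence
`P(E ∩ F) ≤ P(E₀) P(F) ≤ b^C(ℓ,2) P(E) P(F)`, and `P(F) = P(E)` by relabelling the vertices.
-/

open ProbabilityTheory Finset

lemma Finset.exists_perm_image_eq {α : Type*} [DecidableEq α] {A B : Finset α} (h : #A = #B) :
    ∃ π : Equiv.Perm α, A.image π = B := by
  have := Set.powersetCard.isPretransitive (α := α) (n := #B)
  obtain ⟨π, hπ⟩ := MulAction.exists_smul_eq (Equiv.Perm α)
    (Set.powersetCard.ofCard h) (Set.powersetCard.ofCard rfl)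
  refine ⟨π, ?_⟩
  simpa [Set.powersetCard.ofCard, Finset.smul_finset_def] using congrArg Subtype.val hπ

def Sym2.equivCongr {α β : Type*} (e : α ≃ β) : Sym2 α ≃ Sym2 β where
  toFun := Sym2.map e
  invFun := Sym2.map e.symm
  left_inv z := by simp [Sym2.map_map]
  right_inv z := by simp [Sym2.map_map]

lemma ENNReal.le_ofReal_one_div_pow_mul {x y : ENNReal} {q : ℝ} (hq : 0 < q) (m : ℕ)
    (h : x * ENNReal.ofReal q ^ m ≤ y) : x ≤ ENNReal.ofReal ((1 / q) ^ m) * y := by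
  have hinv : ENNReal.ofReal q ^ m * ENNReal.ofReal ((1 / q) ^ m) = 1 := by
    rw [← ENNReal.ofReal_pow hq.le, ← ENNReal.ofReal_mul (by positivity), ← mul_pow,
      mul_one_div_cancel hq.ne', one_pow, ENNReal.ofReal_one]
  calc x = x * ENNReal.ofReal q ^ m * ENNReal.ofReal ((1 / q) ^ m) := by
        rw [mul_assoc, hinv, mul_one]
    _ ≤ ENNReal.ofReal ((1 / q) ^ m) * y := by rw [mul_comm]; gcongr

lemma DependsOn.preimage_restrict_image {ι : Type*} {Ω : ι → Type*} {X : Set (∀ i, Ω i)}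
    {s : Finset ι} (hX : DependsOn (· ∈ X) s) : s.restrict ⁻¹' (s.restrict '' X) = X := by
  refine Set.Subset.antisymm ?_ (Set.subset_preimage_image _ _)
  rintro ω ⟨x, hx, hxω⟩
  exact cast (hX fun i hi => congrFun hxω ⟨i, hi⟩) hx

theorem measure_pi_inter_eq_mul_of_dependsOn {ι : Type*} [Fintype ι] {Ω : ι → Type*}
    [∀ i, MeasurableSpace (Ω i)] [∀ i, Countable (Ω i)] [∀ i, MeasurableSingletonClass (Ω i)]
    (μ : ∀ i, Measure (Ω i)) [∀ i, IsProbabilityMeasure (μ i)] {X Y : Set (∀ i, Ω i)}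
    {s t : Finset ι} (hst : Disjoint s t) (hX : DependsOn (· ∈ X) s)
    (hY : DependsOn (· ∈ Y) t) :
    Measure.pi μ (X ∩ Y) = Measure.pi μ X * Measure.pi μ Y := by
  have hindep : IndepFun s.restrict t.restrict (Measure.pi μ) :=
    (iIndepFun_pi (X := fun _ => id) fun _ => aemeasurable_id).indepFun_finset s t hst
      fun i => measurable_pi_apply i
  rw [← hX.preimage_restrict_image, ← hY.preimage_restrict_image]
  exact hindep.measure_inter_preimage_eq_mul _ _ .of_discrete .of_discrete

theorem measurePreserving_comp_equiv {ι β : Type*} [Fintype ι] [MeasurableSpace β]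
    (ν : Measure β) [SigmaFinite ν] (σ : ι ≃ ι) :
    MeasurePreserving (· ∘ σ) (Measure.pi fun _ => ν) (Measure.pi fun _ => ν) := by
  convert measurePreserving_piCongrLeft (fun _ : ι => ν) σ.symm
  ext
  simp [MeasurableEquiv.coe_piCongrLeft, Equiv.piCongrLeft_apply_eq_cast]

section BernoulliProduct

variable {p : ℝ} {ι : Type*} [Fintype ι]

lemma bernMeasure_singleton_false : bernMeasure p {false} = ENNReal.ofReal (1 - p) := by
  simp [bernMeasure]

lemma isProbabilityMeasure_bernMeasure (hp0 : 0 ≤ p) (hp1 : p ≤ 1) :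
    IsProbabilityMeasure (bernMeasure p) := by
  constructor
  simp [bernMeasure, ← ENNReal.ofReal_add hp0 (sub_nonneg.2 hp1)]

lemma measure_pi_bernMeasure_forall_eq_false (hp0 : 0 ≤ p) (hp1 : p ≤ 1) (S : Finset ι) :
    Measure.pi (fun _ : ι => bernMeasure p) {ω | ∀ i ∈ S, ω i = false}
      = ENNReal.ofReal (1 - p) ^ #S := by
  classical
  have := isProbabilityMeasure_bernMeasure hp0 hp1
  have hpi : {ω : ι → Bool | ∀ i ∈ S, ω i = false}
      = Set.univ.pi fun i => if i ∈ S then {false} else Set.univ := by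
    ext ω
    simp only [Set.mem_ofPred_eq, Set.mem_univ_pi]
    exact forall_congr' fun i => by split_ifs <;> simp [*]
  rw [hpi, Measure.pi_pi]
  simp only [apply_ite (bernMeasure p), bernMeasure_singleton_false, measure_univ, prod_ite_mem,
    univ_inter, prod_const]

theorem measure_inter_mul_le_of_isLowerSet [DecidableEq ι] (hp0 : 0 ≤ p) (hp1 : p ≤ 1)
    {E F : Set (ι → Bool)} {a b : Finset ι} (hE : IsLowerSet E)
    (hEa : DependsOn (· ∈ E) a) (hFb : DependsOn (· ∈ F) b) :
    Measure.pi (fun _ : ι => bernMeasure p) (E ∩ F) * ENNReal.ofReal (1 - p) ^ #(a ∩ b)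
      ≤ Measure.pi (fun _ : ι => bernMeasure p) E * Measure.pi (fun _ : ι => bernMeasure p) F := by
  have := isProbabilityMeasure_bernMeasure hp0 hp1
  set μ := Measure.pi fun _ : ι => bernMeasure p
  set clear : (ι → Bool) → ι → Bool := fun ω => (a ∩ b).piecewise ⊥ ω
  set E₀ := clear ⁻¹' E
  set Z := {ω : ι → Bool | ∀ i ∈ a ∩ b, ω i = false}
  have hE_sub : E ⊆ E₀ := fun ω hω => hE (piecewise_le_of_le_of_le _ bot_le le_rfl) hω
  have hZE₀_sub : Z ∩ E₀ ⊆ E := by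
    rintro ω ⟨hωZ, hωE₀⟩
    have hfix : clear ω = ω := by
      ext i
      by_cases hi : i ∈ a ∩ b
      · rw [show clear ω i = _ from piecewise_eq_of_mem _ _ _ hi, hωZ i hi]; rfl
      · exact piecewise_eq_of_notMem _ _ _ hi
    rwa [← hfix]
  have hE₀ : DependsOn (· ∈ E₀) ↑(a \ b) := fun ω ω' h => hEa fun i hi => by
    by_cases hib : i ∈ b
    · have hiab : i ∈ a ∩ b := mem_inter.2 ⟨hi, hib⟩
      simp only [clear, piecewise_eq_of_mem _ _ _ hiab]
    · have hiab : i ∉ a ∩ b := fun h => hib (mem_inter.1 h).2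
      simp only [clear, piecewise_eq_of_notMem _ _ _ hiab]
      exact h i (mem_sdiff.2 ⟨hi, hib⟩)
  have hZ : DependsOn (· ∈ Z) ↑(a ∩ b) := fun ω ω' h => by
    simp only [Z, Set.mem_ofPred_eq]
    exact propext <| forall₂_congr fun i hi => by rw [h i hi]
  calc μ (E ∩ F) * ENNReal.ofReal (1 - p) ^ #(a ∩ b) ≤ μ (E₀ ∩ F) * μ Z := by
        rw [measure_pi_bernMeasure_forall_eq_false hp0 hp1]
        gcongr
    _ = μ (Z ∩ E₀) * μ F := by
        rw [measure_pi_inter_eq_mul_of_dependsOn _ sdiff_disjoint hE₀ hFb, Set.inter_comm Z,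
          measure_pi_inter_eq_mul_of_dependsOn _ (disjoint_sdiff_inter a b) hE₀ hZ]
        ring
    _ ≤ μ E * μ F := by gcongr

end BernoulliProduct

section Graph

variable {V W : Type*} {t : ℕ}

def edgesWithin [DecidableEq V] (A : Finset V) : Finset (Sym2 V) := {e ∈ A.sym2 | ¬ e.IsDiag}

lemma card_edgesWithin [DecidableEq V] (A : Finset V) : #(edgesWithin A) = (#A).choose 2 := by
  rw [edgesWithin, sym2_eq_image, Sym2.filter_image_mk_not_isDiag, Sym2.card_image_offDiag]

lemma edgesWithin_inter [DecidableEq V] (A B : Finset V) :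
    edgesWithin A ∩ edgesWithin B = edgesWithin (A ∩ B) := by
  ext e
  simp only [edgesWithin, mem_inter, mem_filter, mem_sym2_iff]
  grind

lemma IsTStable.anti {G H : SimpleGraph V} {S : Finset V} (hGH : G ≤ H) (hH : IsTStable H t S) :
    IsTStable G t S := fun v hv =>
  (Set.ncard_le_ncard (t := {u | u ∈ S ∧ H.Adj v u}) (fun _ hu => ⟨hu.1, hGH hu.2⟩)
    (Set.toFinite _)).trans (hH v hv)

lemma isTStable_congr {G H : SimpleGraph V} {S : Finset V}
    (h : ∀ u ∈ S, ∀ v ∈ S, G.Adj u v ↔ H.Adj u v) : IsTStable G t S ↔ IsTStable H t S := by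
  refine forall₂_congr fun v hv => ?_
  rw [Set.ext fun u => and_congr_right fun hu => h v hv u hu]

lemma isTStable_comap_equiv_iff [DecidableEq W] (G : SimpleGraph W) (π : V ≃ W) (S : Finset V) :
    IsTStable (G.comap π) t S ↔ IsTStable G t (S.image π) := by
  simp only [IsTStable, forall_mem_image]
  refine forall₂_congr fun v _ => ?_
  rw [← Set.ncard_image_of_injective _ π.injective]
  congr! 2
  ext w
  simp only [Set.mem_image, Set.mem_ofPred_eq, SimpleGraph.comap_adj, mem_image]
  constructor
  · rintro ⟨u, ⟨hu, hadj⟩, rfl⟩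
    exact ⟨⟨u, hu, rfl⟩, hadj⟩
  · rintro ⟨⟨u, hu, rfl⟩, hadj⟩
    exact ⟨u, ⟨hu, hadj⟩, rfl⟩

variable {n : ℕ}

lemma graphOf_adj {ω : Sym2 (Fin n) → Bool} {u v : Fin n} :
    (graphOf ω).Adj u v ↔ u ≠ v ∧ ω s(u, v) = true := by
  simp [graphOf, Sym2.eq_swap]

lemma graphOf_mono : Monotone (graphOf (n := n)) := fun ω ω' h u v => by
  simp only [graphOf_adj]
  exact And.imp_right (Bool.le_iff_imp.1 (h s(u, v)))

lemma graphOf_comp_sym2EquivCongr (ω : Sym2 (Fin n) → Bool) (π : Equiv.Perm (Fin n)) :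
    graphOf (ω ∘ Sym2.equivCongr π) = (graphOf ω).comap π := by
  ext u v
  simp [graphOf_adj, Sym2.equivCongr]

lemma isLowerSet_setOf_isTStable (t : ℕ) (A : Finset (Fin n)) :
    IsLowerSet {ω : Sym2 (Fin n) → Bool | IsTStable (graphOf ω) t A} :=
  fun _ _ h hω => hω.anti (graphOf_mono h)

lemma dependsOn_isTStable (t : ℕ) (A : Finset (Fin n)) :
    DependsOn (· ∈ {ω : Sym2 (Fin n) → Bool | IsTStable (graphOf ω) t A}) ↑(edgesWithin A) :=
  fun ω ω' h => propext <| isTStable_congr fun u hu v hv => by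
    simp only [graphOf_adj]
    refine and_congr_right fun huv => ?_
    rw [h s(u, v) (by simp [edgesWithin, hu, hv, huv])]

lemma isTStable_graphOf_false (A : Finset (Fin n)) : IsTStable (graphOf fun _ => false) t A :=
  fun v _ => by simp [graphOf_adj]

end Graph

section Gnp

variable {n t : ℕ} {p : ℝ}

instance : IsFiniteMeasure (gnp n p) := inferInstanceAs (IsFiniteMeasure (Measure.pi _))

lemma gnp_isTStable_eq_of_card_eq {A B : Finset (Fin n)} (h : #A = #B) :
    gnp n p {ω | IsTStable (graphOf ω) t A} = gnp n p {ω | IsTStable (graphOf ω) t B} := by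
  obtain ⟨π, rfl⟩ := Finset.exists_perm_image_eq h
  have hpre : (· ∘ Sym2.equivCongr π) ⁻¹' {ω | IsTStable (graphOf ω) t A}
      = {ω | IsTStable (graphOf ω) t (A.image π)} := by
    ext ω
    simp [graphOf_comp_sym2EquivCongr, isTStable_comap_equiv_iff]
  rw [← hpre]
  exact ((measurePreserving_comp_equiv (bernMeasure p) (Sym2.equivCongr π)).measure_preimage
    MeasurableSet.of_discrete.nullMeasurableSet).symm

lemma gnp_isTStable_ne_zero (hp1 : p < 1) (A : Finset (Fin n)) :
    gnp n p {ω | IsTStable (graphOf ω) t A} ≠ 0 := by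
  have hfalse : gnp n p {fun _ => false} ≠ 0 := by
    simp [gnp, bernMeasure_singleton_false, hp1]
  exact fun h0 => hfalse (measure_mono_null
    (Set.singleton_subset_iff.2 (isTStable_graphOf_false A)) h0)

end Gnp

theorem stmt13 (p : ℝ) (hp0 : 0 < p) (hp1 : p < 1) (t : ℕ) (n k ℓ : ℕ)
    (A B : Finset (Fin n)) (hA : A.card = k) (hB : B.card = k)
    (hAB : (A ∩ B).card = ℓ) :
    ProbabilityTheory.cond (gnp n p) {ω | IsTStable (graphOf ω) t B}
        {ω | IsTStable (graphOf ω) t A}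
      ≤ ENNReal.ofReal ((1/(1-p)) ^ Nat.choose ℓ 2) *
          gnp n p {ω | IsTStable (graphOf ω) t A} ∧
    gnp n p ({ω | IsTStable (graphOf ω) t A} ∩ {ω | IsTStable (graphOf ω) t B})
      ≤ ENNReal.ofReal ((1/(1-p)) ^ Nat.choose ℓ 2) *
          (gnp n p {ω | IsTStable (graphOf ω) t A}) ^ 2 := by
  set E := {ω | IsTStable (graphOf ω) t A}
  set F := {ω | IsTStable (graphOf ω) t B}
  have hcorr : gnp n p (E ∩ F)
      ≤ ENNReal.ofReal ((1/(1-p)) ^ Nat.choose ℓ 2) * (gnp n p E * gnp n p F) := by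
    have h := measure_inter_mul_le_of_isLowerSet hp0.le hp1.le (isLowerSet_setOf_isTStable t A)
      (dependsOn_isTStable t A) (dependsOn_isTStable t B)
    rw [edgesWithin_inter, card_edgesWithin, hAB] at h
    exact ENNReal.le_ofReal_one_div_pow_mul (sub_pos.2 hp1) _ h
  have hFE : gnp n p F = gnp n p E := gnp_isTStable_eq_of_card_eq (hB.trans hA.symm)
  refine ⟨?_, by rwa [hFE, ← sq] at hcorr⟩
  rw [cond_apply MeasurableSet.of_discrete, Set.inter_comm,
    ENNReal.inv_mul_le_iff (gnp_isTStable_ne_zero hp1 B) (measure_ne_top _ _)]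
  calc gnp n p (E ∩ F) ≤ _ := hcorr
    _ = _ := by ring
end

section
/- Fix a real number p with 0 < p < 1 and an integer t ≥ 0. Let A and B be two k-element subsets of the vertex set of G_{n,p} with |A ∩ B| = ℓ, where t ≤ ℓ ≤ k. Then P( B is t-stable | A is t-stable ) ≤ ( C(ℓ, ℓ−t) · (1−p)^{ℓ−t} )^{k−ℓ}; indeed the probability that every vertex of B∖A has at most t neighbours in A ∩ B is at most ( C(ℓ, ℓ−t) · (1−p)^{ℓ−t} )^{k−ℓ}, and this event is independent of the edges within A. -/
open MeasureTheory Filter Asymptotics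

open scoped ENNReal

lemma bern_univ (p : ℝ) (h0 : 0 ≤ p) (h1 : p ≤ 1) : bernMeasure p Set.univ = 1 := by
  simp only [bernMeasure, Measure.add_apply, Measure.smul_apply, smul_eq_mul,
    Measure.dirac_apply' _ MeasurableSet.univ, Set.mem_univ, Set.indicator_of_mem,
    Pi.one_apply, mul_one]
  rw [← ENNReal.ofReal_add h0 (by linarith)]
  norm_num

lemma bern_prob (p : ℝ) (h0 : 0 ≤ p) (h1 : p ≤ 1) : IsProbabilityMeasure (bernMeasure p) :=
  ⟨bern_univ p h0 h1⟩

lemma measSet_all {ι : Type*} [Finite ι] (s : Set (ι → Bool)) : MeasurableSet s := by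
  have h1 : ∀ f : ι → Bool, MeasurableSet ({f} : Set (ι → Bool)) := by
    intro f
    have : ({f} : Set (ι → Bool)) = Set.pi Set.univ (fun i => {f i}) := by
      ext g; simp [funext_iff]
    rw [this]
    exact MeasurableSet.univ_pi fun i => MeasurableSet.singleton _
  rw [← Set.biUnion_of_singleton s]
  exact MeasurableSet.biUnion ((Set.toFinite s).countable) fun f _ => h1 f

lemma pi_mul {ι : Type*} [Fintype ι] (μ : ι → Measure Bool) [∀ i, IsProbabilityMeasure (μ i)]
    (P : ι → Prop) [DecidablePred P] (s t : Set (ι → Bool))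
    (h1 : ∀ f g : ι → Bool, (∀ i, ¬ P i → f i = g i) → f ∈ s → g ∈ s)
    (h2 : ∀ f g : ι → Bool, (∀ i, P i → f i = g i) → f ∈ t → g ∈ t) :
    Measure.pi μ (s ∩ t) = Measure.pi μ s * Measure.pi μ t := by
  classical
  set e := MeasurableEquiv.piEquivPiSubtypeProd (fun _ : ι => Bool) P with he
  have hmp := measurePreserving_piEquivPiSubtypeProd μ P
  set s₂ : Set ({i // ¬ P i} → Bool) := Prod.snd '' (e '' s) with hs₂
  set t₁ : Set ({i // P i} → Bool) := Prod.fst '' (e '' t) with ht₁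
  have key : ∀ f : ι → Bool, (f ∈ s ↔ (e f).2 ∈ s₂) ∧ (f ∈ t ↔ (e f).1 ∈ t₁) := by
    intro f
    constructor
    · constructor
      · intro hf; exact ⟨e f, Set.mem_image_of_mem e hf, rfl⟩
      · rintro ⟨-, ⟨g, hg, rfl⟩, hag⟩
        refine h1 g f (fun i hi => ?_) hg
        have := congrFun hag ⟨i, hi⟩
        simpa [e, MeasurableEquiv.piEquivPiSubtypeProd, Equiv.piEquivPiSubtypeProd] using this
    · constructor
      · intro hf; exact ⟨e f, Set.mem_image_of_mem e hf, rfl⟩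
      · rintro ⟨-, ⟨g, hg, rfl⟩, hag⟩
        refine h2 g f (fun i hi => ?_) hg
        have := congrFun hag ⟨i, hi⟩
        simpa [e, MeasurableEquiv.piEquivPiSubtypeProd, Equiv.piEquivPiSubtypeProd] using this
  have hs : s = e ⁻¹' (Set.univ ×ˢ s₂) := by
    ext f; simpa using (key f).1
  have ht : t = e ⁻¹' (t₁ ×ˢ Set.univ) := by
    ext f; simpa using (key f).2
  have hst : s ∩ t = e ⁻¹' (t₁ ×ˢ s₂) := by
    ext f
    simp only [Set.mem_inter_iff, (key f).1, (key f).2, Set.mem_preimage, Set.mem_prod]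
    tauto
  rw [hst, hs, ht, hmp.measure_preimage_equiv, hmp.measure_preimage_equiv,
    hmp.measure_preimage_equiv, Measure.prod_prod, Measure.prod_prod, Measure.prod_prod]
  simp [mul_comm]

lemma gnp_cyl (n : ℕ) (p : ℝ) (h0 : 0 ≤ p) (h1 : p ≤ 1) (E : Finset (Sym2 (Fin n))) :
    gnp n p {ω | ∀ e ∈ E, ω e = false} = ENNReal.ofReal (1 - p) ^ E.card := by
  classical
  have hset : {ω : Sym2 (Fin n) → Bool | ∀ e ∈ E, ω e = false}
      = Set.pi Set.univ (fun e => if e ∈ E then ({false} : Set Bool) else Set.univ) := by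
    ext ω
    simp only [Set.mem_setOf_eq, Set.mem_pi, Set.mem_univ, forall_true_left]
    constructor
    · intro h e; split_ifs with he
      · simp [h e he]
      · trivial
    · intro h e he; have := h e; rw [if_pos he] at this; simpa using this
  rw [gnp, hset, Measure.pi_pi]
  have hb : ∀ e : Sym2 (Fin n), bernMeasure p (if e ∈ E then ({false} : Set Bool) else Set.univ)
      = if e ∈ E then ENNReal.ofReal (1 - p) else 1 := by
    intro e; split_ifs
    · simp [bernMeasure, Measure.dirac_apply]
    · exact bern_univ p h0 h1
  simp_rw [hb]
  rw [Finset.prod_ite_mem, Finset.univ_inter, Finset.prod_const]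

lemma adj_iff {n : ℕ} (ω : Sym2 (Fin n) → Bool) {v u : Fin n} (h : v ≠ u) :
    (graphOf ω).Adj v u ↔ ω s(v, u) = true := by
  rw [graphOf, SimpleGraph.fromRel_adj]
  rw [Sym2.eq_swap (a := u) (b := v)]
  tauto

lemma nbr_card {n t : ℕ} (ω : Sym2 (Fin n) → Bool) (C : Finset (Fin n)) {v : Fin n}
    (hv : v ∉ C) (ht : {u | u ∈ C ∧ (graphOf ω).Adj v u}.ncard ≤ t) :
    C.card - t ≤ (C.filter fun u => ω s(v, u) = false).card := by
  classical
  have hset : {u | u ∈ C ∧ (graphOf ω).Adj v u}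
      = ↑(C.filter fun u => ω s(v, u) = true) := by
    ext u
    simp only [Set.mem_setOf_eq, Finset.coe_filter, Set.mem_setOf_eq]
    constructor
    · rintro ⟨hu, hadj⟩
      exact ⟨hu, (adj_iff ω hadj.ne).1 hadj⟩
    · rintro ⟨hu, hω⟩
      have hne : v ≠ u := fun h => hv (by rw [h]; exact hu)
      exact ⟨hu, (adj_iff ω hne).2 hω⟩
  rw [hset, Set.ncard_coe_finset] at ht
  have h3 := Finset.card_filter_add_card_filter_not
    (s := C) (p := fun u => ω s(v, u) = true)
  have h2 : (C.filter fun u => ¬ ω s(v, u) = true) = (C.filter fun u => ω s(v, u) = false) := by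
    apply Finset.filter_congr; intro u _; simp
  rw [h2] at h3
  omega

lemma F_bound (p : ℝ) (hp0 : 0 < p) (hp1 : p < 1) (t n k ℓ : ℕ)
    (hℓk : ℓ ≤ k)
    (A B : Finset (Fin n)) (hB : B.card = k)
    (hAB : (A ∩ B).card = ℓ) :
    gnp n p {ω | ∀ v ∈ B \ A,
        ({u | u ∈ A ∩ B ∧ (graphOf ω).Adj v u}).ncard ≤ t}
      ≤ ENNReal.ofReal
          (((Nat.choose ℓ (ℓ - t) : ℝ) * (1 - p) ^ (ℓ - t)) ^ (k - ℓ)) := by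
  classical
  have hD : (B \ A).card = k - ℓ := by
    have h := Finset.card_inter_add_card_sdiff B A
    rw [Finset.inter_comm] at h
    omega
  have hvC : ∀ v ∈ B \ A, v ∉ A ∩ B := by
    intro v hv hvc
    exact (Finset.mem_sdiff.1 hv).2 (Finset.mem_inter.1 hvc).1
  let T := {v // v ∈ B \ A} → {S // S ∈ (A ∩ B).powersetCard (ℓ - t)}
  let Eσ : T → Finset (Sym2 (Fin n)) :=
    fun σ => Finset.univ.biUnion (fun v : {v // v ∈ B \ A} =>
      (σ v).1.image (fun u => s(v.1, u)))
  let Cyl : T → Set (Sym2 (Fin n) → Bool) := fun σ => {ω | ∀ e ∈ Eσ σ, ω e = false}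
  have hmem : ∀ (σ : T) (v : {v // v ∈ B \ A}),
      (σ v).1 ⊆ A ∩ B ∧ (σ v).1.card = ℓ - t :=
    fun σ v => Finset.mem_powersetCard.1 (σ v).2
  have hEcard : ∀ σ : T, (Eσ σ).card = (k - ℓ) * (ℓ - t) := by
    intro σ
    rw [Finset.card_biUnion]
    · have him : ∀ v : {v // v ∈ B \ A},
          ((σ v).1.image (fun u => s(v.1, u))).card = ℓ - t := by
        intro v
        rw [Finset.card_image_of_injOn, (hmem σ v).2]
        intro u hu u' hu' he
        rcases Sym2.eq_iff.1 he with ⟨-, h⟩ | ⟨h1, -⟩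
        · exact h
        · exfalso; apply hvC v.1 v.2; apply (hmem σ v).1; rw [h1]; exact hu'
      simp_rw [him]
      rw [Finset.sum_const, Finset.card_univ, Fintype.card_coe, hD, smul_eq_mul]
    · intro v _ v' _ hvv'
      apply Finset.disjoint_left.2
      rintro e he he'
      rcases Finset.mem_image.1 he with ⟨u, hu, rfl⟩
      rcases Finset.mem_image.1 he' with ⟨u', hu', heq⟩
      rcases Sym2.eq_iff.1 heq with ⟨h1, -⟩ | ⟨h1, h2⟩
      · exact hvv' (Subtype.ext h1.symm)
      · exact (hvC v.1 v.2) ((hmem σ v').1 (by rw [← h2]; exact hu'))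
  have hT : (Fintype.card T : ℝ≥0∞) = (Nat.choose ℓ (ℓ - t) : ℝ≥0∞) ^ (k - ℓ) := by
    have h : Fintype.card T = Nat.choose ℓ (ℓ - t) ^ (k - ℓ) := by
      rw [Fintype.card_fun, Fintype.card_coe, Fintype.card_coe,
        Finset.card_powersetCard, hAB, hD]
    rw [h]; push_cast; ring
  have hsub : {ω : Sym2 (Fin n) → Bool | ∀ v ∈ B \ A,
      ({u | u ∈ A ∩ B ∧ (graphOf ω).Adj v u}).ncard ≤ t} ⊆ ⋃ σ : T, Cyl σ := by
    intro ω hω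
    have hex : ∀ v : {v // v ∈ B \ A}, ∃ S ∈ (A ∩ B).powersetCard (ℓ - t),
        S ⊆ (A ∩ B).filter fun u => ω s(v.1, u) = false := by
      intro v
      have h1 : (A ∩ B).card - t ≤ ((A ∩ B).filter fun u => ω s(v.1, u) = false).card :=
        nbr_card ω (A ∩ B) (hvC v.1 v.2) (hω v.1 v.2)
      rw [hAB] at h1
      obtain ⟨S, hS1, hS2⟩ := Finset.exists_subset_card_eq h1
      exact ⟨S, Finset.mem_powersetCard.2
        ⟨hS1.trans (Finset.filter_subset _ _), hS2⟩, hS1⟩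
    choose f hf1 hf2 using hex
    refine Set.mem_iUnion.2 ⟨fun v => ⟨f v, hf1 v⟩, ?_⟩
    intro e he
    rcases Finset.mem_biUnion.1 he with ⟨v, -, hv⟩
    rcases Finset.mem_image.1 hv with ⟨u, hu, rfl⟩
    exact (Finset.mem_filter.1 (hf2 v hu)).2
  calc gnp n p {ω | ∀ v ∈ B \ A, ({u | u ∈ A ∩ B ∧ (graphOf ω).Adj v u}).ncard ≤ t}
      ≤ gnp n p (⋃ σ : T, Cyl σ) := measure_mono hsub
    _ ≤ ∑ σ : T, gnp n p (Cyl σ) := measure_iUnion_fintype_le _ _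
    _ = ∑ σ : T, ENNReal.ofReal (1 - p) ^ ((k - ℓ) * (ℓ - t)) := by
        refine Finset.sum_congr rfl fun σ _ => ?_
        rw [show Cyl σ = {ω | ∀ e ∈ Eσ σ, ω e = false} from rfl,
          gnp_cyl n p hp0.le hp1.le, hEcard σ]
    _ = (Fintype.card T : ℝ≥0∞) * ENNReal.ofReal (1 - p) ^ ((k - ℓ) * (ℓ - t)) := by
        rw [Finset.sum_const, Finset.card_univ, nsmul_eq_mul]
    _ = ENNReal.ofReal (((Nat.choose ℓ (ℓ - t) : ℝ) * (1 - p) ^ (ℓ - t)) ^ (k - ℓ)) := by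
        rw [hT, ENNReal.ofReal_pow (mul_nonneg (Nat.cast_nonneg _)
            (pow_nonneg (by linarith) _)),
          ENNReal.ofReal_mul (Nat.cast_nonneg _), ENNReal.ofReal_natCast,
          ENNReal.ofReal_pow (by linarith), mul_pow, ← pow_mul, Nat.mul_comm]

lemma indep_FA (p : ℝ) (hp0 : 0 < p) (hp1 : p < 1) (t n : ℕ)
    (A B : Finset (Fin n)) :
    gnp n p ({ω : Sym2 (Fin n) → Bool | ∀ v ∈ B \ A,
          ({u | u ∈ A ∩ B ∧ (graphOf ω).Adj v u}).ncard ≤ t}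
        ∩ {ω : Sym2 (Fin n) → Bool | IsTStable (graphOf ω) t A})
      = gnp n p {ω : Sym2 (Fin n) → Bool | ∀ v ∈ B \ A,
          ({u | u ∈ A ∩ B ∧ (graphOf ω).Adj v u}).ncard ≤ t}
        * gnp n p {ω : Sym2 (Fin n) → Bool | IsTStable (graphOf ω) t A} := by
  classical
  haveI := bern_prob p hp0.le hp1.le
  set P : Sym2 (Fin n) → Prop := fun z => ∀ w ∈ z, w ∈ A with hP
  refine pi_mul (fun _ => bernMeasure p) P _ _ ?_ ?_
  · -- F depends only on non-P coordinates
    intro f g hfg hf v hv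
    have key : {u | u ∈ A ∩ B ∧ (graphOf g).Adj v u}
        = {u | u ∈ A ∩ B ∧ (graphOf f).Adj v u} := by
      ext u
      simp only [Set.mem_setOf_eq]
      refine and_congr_right fun hu => ?_
      have hne : v ≠ u := fun h =>
        (Finset.mem_sdiff.1 hv).2 (by rw [h]; exact (Finset.mem_inter.1 hu).1)
      rw [adj_iff g hne, adj_iff f hne, hfg s(v, u) ?_]
      intro hPz
      exact (Finset.mem_sdiff.1 hv).2 (hPz v (Sym2.mem_mk_left v u))
    rw [key]
    exact hf v hv
  · -- stability of A depends only on P coordinates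
    intro f g hfg hf v hv
    have key : {u | u ∈ A ∧ (graphOf g).Adj v u}
        = {u | u ∈ A ∧ (graphOf f).Adj v u} := by
      ext u
      simp only [Set.mem_setOf_eq]
      refine and_congr_right fun hu => ?_
      by_cases hvu : v = u
      · subst hvu; simp
      · rw [adj_iff g hvu, adj_iff f hvu, hfg s(v, u) ?_]
        intro w hw
        rcases Sym2.mem_iff.1 hw with rfl | rfl
        · exact hv
        · exact hu
    exact (key ▸ hf v hv : _)

theorem stmt14 (p : ℝ) (hp0 : 0 < p) (hp1 : p < 1) (t : ℕ) (n k ℓ : ℕ)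
    (htℓ : t ≤ ℓ) (hℓk : ℓ ≤ k)
    (A B : Finset (Fin n)) (hA : A.card = k) (hB : B.card = k)
    (hAB : (A ∩ B).card = ℓ) :
    ProbabilityTheory.cond (gnp n p) {ω | IsTStable (graphOf ω) t A}
        {ω | IsTStable (graphOf ω) t B}
      ≤ ENNReal.ofReal
          (((Nat.choose ℓ (ℓ - t) : ℝ) * (1 - p) ^ (ℓ - t)) ^ (k - ℓ)) ∧
    gnp n p {ω | ∀ v ∈ B \ A,
        ({u | u ∈ A ∩ B ∧ (graphOf ω).Adj v u}).ncard ≤ t}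
      ≤ ENNReal.ofReal
          (((Nat.choose ℓ (ℓ - t) : ℝ) * (1 - p) ^ (ℓ - t)) ^ (k - ℓ)) ∧
    ProbabilityTheory.IndepSet
      {ω : Sym2 (Fin n) → Bool | ∀ v ∈ B \ A,
        ({u | u ∈ A ∩ B ∧ (graphOf ω).Adj v u}).ncard ≤ t}
      {ω : Sym2 (Fin n) → Bool | IsTStable (graphOf ω) t A}
      (gnp n p) := by
  haveI := bern_prob p hp0.le hp1.le
  haveI : IsProbabilityMeasure (gnp n p) := by unfold gnp; infer_instance
  set F := {ω : Sym2 (Fin n) → Bool | ∀ v ∈ B \ A,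
      ({u | u ∈ A ∩ B ∧ (graphOf ω).Adj v u}).ncard ≤ t} with hF
  set EA := {ω : Sym2 (Fin n) → Bool | IsTStable (graphOf ω) t A} with hEA
  set EB := {ω : Sym2 (Fin n) → Bool | IsTStable (graphOf ω) t B} with hEB
  have hFb : gnp n p F ≤ ENNReal.ofReal
      (((Nat.choose ℓ (ℓ - t) : ℝ) * (1 - p) ^ (ℓ - t)) ^ (k - ℓ)) :=
    F_bound p hp0 hp1 t n k ℓ hℓk A B hB hAB
  have hind := indep_FA p hp0 hp1 t n A B
  rw [← hF, ← hEA] at hind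
  refine ⟨?_, hFb, ?_⟩
  · -- conditional probability bound
    have hBF : EB ⊆ F := by
      intro ω hω v hv
      refine le_trans (Set.ncard_le_ncard ?_ (Set.toFinite _)) (hω v (Finset.mem_sdiff.1 hv).1)
      intro u hu
      exact ⟨(Finset.mem_inter.1 hu.1).2, hu.2⟩
    rw [ProbabilityTheory.cond_apply (measSet_all EA)]
    calc (gnp n p EA)⁻¹ * gnp n p (EA ∩ EB)
        ≤ (gnp n p EA)⁻¹ * gnp n p (EA ∩ F) :=
          mul_le_mul_right (measure_mono (Set.inter_subset_inter_right EA hBF)) _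
      _ = (gnp n p EA)⁻¹ * (gnp n p F * gnp n p EA) := by
          rw [Set.inter_comm, hind]
      _ ≤ gnp n p F := by
          rw [mul_comm (gnp n p F), ← mul_assoc]
          calc (gnp n p EA)⁻¹ * gnp n p EA * gnp n p F
              ≤ 1 * gnp n p F :=
                mul_le_mul_left (ENNReal.inv_mul_le_one _) _
            _ = gnp n p F := one_mul _
      _ ≤ _ := hFb
  · rw [ProbabilityTheory.indepSet_iff_measure_inter_eq_mul (measSet_all F) (measSet_all EA)
      (gnp n p)]
    exact hind
end

section
/- Fix an integer t ≥ 1 and let S_{2m}(t,k) denote the number of functions from a set of 2m labelled balls to a set of k labelled bins such that every bin receives at most t balls. If 2m + 2 ≤ tk, then ((tk−2m)/t)·((tk−2m)/t − 1) · S_{2m}(t,k) ≤ S_{2m+2}(t,k) ≤ (tk−2m)^2 · S_{2m}(t,k). -/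
/-- `S_{2m}(t,k)`: the number of functions from `2m` labelled balls to `k` labelled
bins such that every bin receives at most `t` balls. -/
noncomputable def Stk (t k m : ℕ) : ℕ :=
  Nat.card {f : Fin (2 * m) → Fin k // ∀ j : Fin k, ({i | f i = j}).ncard ≤ t}

/-!
Split the `2m + 2` balls into the first `2m` and the last two. A capped placement `g` of the
first `2m` balls leaves `∑ (t - load) = tk - 2m` free places, spread over `N` non-full bins with
`(tk - 2m) / t ≤ N ≤ tk - 2m`. The last two balls can be added in at most `N²` ways (each must go
to a non-full bin) and in at least `N (N - 1)` ways (any two distinct non-full bins will do).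
Summing over `g` gives both bounds.
-/

open Finset

lemma mul_sub_one_le_natCast_mul_sub_one {x : ℝ} {n : ℕ} (hx : 0 ≤ x) (hxn : x ≤ n) :
    x * (x - 1) ≤ n * (n - 1) := by
  rcases n.eq_zero_or_pos with rfl | hn
  · simp [le_antisymm (by simpa using hxn) hx]
  · have : (1 : ℝ) ≤ n := by exact_mod_cast hn
    nlinarith

namespace BallsInBins

variable {α α' β γ : Type*} [Fintype α] [Fintype α'] [Fintype γ] [DecidableEq β]

def load (f : α → β) (b : β) : ℕ := #{a | f a = b}

lemma load_comp_equiv (e : α' ≃ α) (f : α → β) (b : β) : load (f ∘ e) b = load f b :=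
  card_equiv e (by simp)

lemma load_sumElim (g : α → β) (h : γ → β) (b : β) :
    load (Sum.elim g h) b = load g b + load h b := by
  simp only [load, ← Fintype.card_subtype]
  rw [Fintype.card_congr (Equiv.subtypeSum (p := fun c => Sum.elim g h c = b)), Fintype.card_sum]
  rfl

lemma load_le_one_of_injective {h : γ → β} (hinj : h.Injective) (b : β) : load h b ≤ 1 :=
  card_le_one.2 fun _ hx _ hy => hinj <| by simp_all

lemma load_eq_zero_of_notMem_range {h : γ → β} {b : β} (hb : b ∉ Set.range h) : load h b = 0 :=
  card_eq_zero.2 <| filter_eq_empty_iff.2 fun c _ hc => hb ⟨c, hc⟩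

lemma one_le_load_apply (h : γ → β) (c : γ) : 1 ≤ load h (h c) :=
  card_pos.2 ⟨c, by simp⟩

variable [Fintype β]

lemma sum_load (f : α → β) : ∑ b, load f b = Fintype.card α :=
  (card_eq_sum_card_fiberwise fun _ _ => mem_coe.2 (mem_univ _)).symm

def freeBins (t : ℕ) (f : α → β) : Finset β := {b | load f b < t}

def cappedExtensions (t : ℕ) (g : α → β) (γ : Type*) [Fintype γ] [DecidableEq γ] :
    Finset (γ → β) :=
  {h | ∀ b, load g b + load h b ≤ t}

variable {t : ℕ} {g : α → β}

lemma sum_sub_load (hg : ∀ b, load g b ≤ t) :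
    ∑ b, (t - load g b) = t * Fintype.card β - Fintype.card α := by
  have : ∑ b, ((t - load g b) + load g b) = t * Fintype.card β := by
    simp [Nat.sub_add_cancel (hg _), mul_comm]
  rw [sum_add_distrib, sum_load] at this
  omega

lemma card_freeBins_le (hg : ∀ b, load g b ≤ t) :
    #(freeBins t g) ≤ t * Fintype.card β - Fintype.card α := by
  rw [← sum_sub_load hg, card_eq_sum_ones, freeBins, sum_filter]
  exact sum_le_sum fun b _ => by split_ifs <;> omega

lemma sub_le_mul_card_freeBins (hg : ∀ b, load g b ≤ t) :
    t * Fintype.card β - Fintype.card α ≤ t * #(freeBins t g) := by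
  rw [← sum_sub_load hg, mul_comm, ← smul_eq_mul, ← sum_const, freeBins, sum_filter]
  exact sum_le_sum fun b _ => by split_ifs <;> omega

variable [DecidableEq γ]

lemma card_cappedExtensions_le :
    #(cappedExtensions t g γ) ≤ #(freeBins t g) ^ Fintype.card γ := by
  calc #(cappedExtensions t g γ) ≤ #(Fintype.piFinset fun _ : γ => freeBins t g) := by
        refine card_le_card fun h hh => Fintype.mem_piFinset.2 fun c => ?_
        have hc := (mem_filter.1 hh).2 (h c)
        have := one_le_load_apply h c
        simp only [freeBins, mem_filter, mem_univ, true_and]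
        omega
    _ = _ := by simp [Fintype.card_piFinset]

lemma descFactorial_card_freeBins_le (hg : ∀ b, load g b ≤ t) :
    (#(freeBins t g)).descFactorial (Fintype.card γ) ≤ #(cappedExtensions t g γ) := by
  rw [← Fintype.card_coe, ← Fintype.card_embedding_eq, ← card_univ]
  refine card_le_card_of_injOn (fun e c => (e c : β)) (fun e _ => ?_) fun e₁ _ e₂ _ he => ?_
  · refine mem_coe.2 <| mem_filter.2 ⟨mem_univ _, fun b => ?_⟩
    by_cases hb : b ∈ Set.range fun c => (e c : β)
    · obtain ⟨c, rfl⟩ := hb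
      have hfree : load g (e c : β) < t := (mem_filter.1 (e c).2).2
      have := load_le_one_of_injective (Subtype.val_injective.comp e.injective) (e c : β)
      change load g (e c : β) + load (Subtype.val ∘ e) (e c : β) ≤ t
      omega
    · rw [load_eq_zero_of_notMem_range hb, add_zero]
      exact hg b
  · exact DFunLike.ext _ _ fun c => Subtype.ext (congrFun he c)

variable [DecidableEq α] [DecidableEq α']

def cappedFns (t : ℕ) (α β : Type*) [Fintype α] [DecidableEq α] [Fintype β] [DecidableEq β] :
    Finset (α → β) :=
  {f | ∀ b, load f b ≤ t}

@[simp] lemma mem_cappedFns {f : α → β} : f ∈ cappedFns t α β ↔ ∀ b, load f b ≤ t := by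
  simp [cappedFns]

lemma card_cappedFns_congr (e : α ≃ α') : #(cappedFns t α β) = #(cappedFns t α' β) :=
  card_equiv (e.arrowCongr (Equiv.refl β)) fun f => by
    simp only [cappedFns, mem_filter, mem_univ, true_and]
    rw [show e.arrowCongr (Equiv.refl β) f = f ∘ e.symm from rfl]
    simp only [load_comp_equiv]

lemma card_cappedFns_sum :
    #(cappedFns t (α ⊕ γ) β) = ∑ g ∈ cappedFns t α β, #(cappedExtensions t g γ) := by
  have hprod : #(cappedFns t (α ⊕ γ) β) =
      #({p : (α → β) × (γ → β) | ∀ b, load p.1 b + load p.2 b ≤ t} : Finset _) :=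
    (card_equiv (Equiv.sumArrowEquivProdArrow α γ β).symm fun p => by
      rw [show (Equiv.sumArrowEquivProdArrow α γ β).symm p = Sum.elim p.1 p.2 from rfl]
      simp [cappedFns, load_sumElim]).symm
  have hout (g) (hg : g ∉ cappedFns t α β) : cappedExtensions t g γ = ∅ :=
    filter_eq_empty_iff.2 fun _ _ hh =>
      hg <| mem_filter.2 ⟨mem_univ _, fun b => (Nat.le_add_right _ _).trans (hh b)⟩
  calc _ = ∑ g, #(cappedExtensions t g γ) := by
        rw [hprod, card_filter, Fintype.sum_prod_type]
        simp only [cappedExtensions, card_filter]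
    _ = _ := (sum_subset (subset_univ _) fun g _ hg => by rw [hout g hg, card_empty]).symm

lemma card_cappedFns_sum_le :
    #(cappedFns t (α ⊕ γ) β) ≤
      (t * Fintype.card β - Fintype.card α) ^ Fintype.card γ * #(cappedFns t α β) := by
  rw [card_cappedFns_sum, mul_comm, ← smul_eq_mul, ← sum_const]
  exact sum_le_sum fun g hg => card_cappedExtensions_le.trans <|
    Nat.pow_le_pow_left (card_freeBins_le (mem_cappedFns.1 hg)) _

lemma le_card_cappedFns_sum_fin_two (ht : 0 < t) :
    ((t * Fintype.card β - Fintype.card α : ℕ) / t : ℝ) *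
        ((t * Fintype.card β - Fintype.card α : ℕ) / t - 1) * #(cappedFns t α β) ≤
      #(cappedFns t (α ⊕ Fin 2) β) := by
  rw [card_cappedFns_sum, Nat.cast_sum, mul_comm, ← nsmul_eq_mul, ← sum_const]
  refine sum_le_sum fun g hg => ?_
  have hg := mem_cappedFns.1 hg
  have hx : ((t * Fintype.card β - Fintype.card α : ℕ) / t : ℝ) ≤ #(freeBins t g) := by
    rw [div_le_iff₀ (by exact_mod_cast ht)]
    exact_mod_cast (sub_le_mul_card_freeBins hg).trans_eq (mul_comm _ _)
  calc _ ≤ (#(freeBins t g) : ℝ) * (#(freeBins t g) - 1) :=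
        mul_sub_one_le_natCast_mul_sub_one (by positivity) hx
    _ = ((#(freeBins t g)).descFactorial (Fintype.card (Fin 2)) : ℕ) := by
        rw [Fintype.card_fin, Nat.cast_descFactorial_two]
    _ ≤ #(cappedExtensions t g (Fin 2)) := by exact_mod_cast descFactorial_card_freeBins_le hg

end BallsInBins

open BallsInBins

lemma Stk_eq_card_cappedFns (t k m : ℕ) :
    Stk t k m = #(cappedFns t (Fin (2 * m)) (Fin k)) := by
  rw [Stk, Nat.card_eq_fintype_card, Fintype.card_subtype]
  congr 1
  ext f
  simp [load, Set.ncard_eq_toFinset_card']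

theorem stmt15_general (t k m : ℕ) (h : 2 * m + 2 ≤ t * k) :
    (((t : ℝ) * k - 2 * m) / t) * (((t : ℝ) * k - 2 * m) / t - 1) * (Stk t k m : ℝ)
        ≤ (Stk t k (m + 1) : ℝ) ∧
    (Stk t k (m + 1) : ℝ) ≤ ((t : ℝ) * k - 2 * m) ^ 2 * (Stk t k m : ℝ) := by
  have ht : 0 < t := Nat.pos_of_ne_zero (by rintro rfl; omega)
  have hcast : ((t * k - 2 * m : ℕ) : ℝ) = t * k - 2 * m := by
    rw [Nat.cast_sub (by omega)]; push_cast; ring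
  have hsucc : Stk t k (m + 1) = #(cappedFns t (Fin (2 * m) ⊕ Fin 2) (Fin k)) := by
    rw [Stk_eq_card_cappedFns,
      card_cappedFns_congr
        ((finCongr (by ring : 2 * (m + 1) = 2 * m + 2)).trans finSumFinEquiv.symm)]
  have hlower := le_card_cappedFns_sum_fin_two (α := Fin (2 * m)) (β := Fin k) ht
  have hupper := card_cappedFns_sum_le (t := t) (α := Fin (2 * m)) (β := Fin k) (γ := Fin 2)
  simp only [Fintype.card_fin] at hlower hupper
  rw [hsucc, Stk_eq_card_cappedFns, ← hcast]
  exact ⟨hlower, by exact_mod_cast hupper⟩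

theorem stmt15 (t k m : ℕ) (ht : 1 ≤ t) (h : 2 * m + 2 ≤ t * k) :
    (((t : ℝ) * k - 2 * m) / t) * (((t : ℝ) * k - 2 * m) / t - 1) * (Stk t k m : ℝ)
        ≤ (Stk t k (m + 1) : ℝ) ∧
    (Stk t k (m + 1) : ℝ) ≤ ((t : ℝ) * k - 2 * m) ^ 2 * (Stk t k m : ℝ) :=
  stmt15_general t k m h
end

section
/- Fix a real number b > 1 and an integer t ≥ 0, and let (C_n) be a bounded sequence of reals such that α_C(n) := 2 log_b n + (t−2) log_b log_b n − C_n is a positive integer, and set r := ⌊n/α_C(n)⌋. For an r-tuple (k_1,…,k_r) of positive integers with Σ_i k_i = n, define h(k_1,…,k_r) := −Σ_{i=1}^r ( k_i^2/2 − (t/2)·k_i·log_b k_i ). Then for all sufficiently large n, h is maximized over all such r-tuples (with every k_i ≤ α_C(n) + 1) by the balanced tuples, i.e. those in which any two parts differ in size by at most one. -/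
/-!
Write `h = Σ f(k_i)` with `f(k) = (t/2) k log_b k − k²/2`. Its forward difference is
`Δf(a) = c ((a+1) log(a+1) − a log a) − (a + 1/2)` with `c = t / (2 log b)`, and the elementary
bounds `x/(x+1) ≤ x log(1 + 1/x) ≤ 1` show that `Δf(a) ≤ Δf(j)` for all `1 ≤ j < a` once `a` is
large. Hence on `[1, a+1]` the function `f` lies below the line through `(a, f a)` and
`(a+1, f (a+1))`. A balanced tuple with `r = ⌊n/a⌋` parts summing to `n` has all its parts in
`{a, a+1}`, where `f` agrees with that line, and the sum of the line over any tuple depends only on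
`Σ k_i = n`. Since `α_C(n) → ∞`, this applies to `a = α_C(n)` for all large `n`.
-/

open Filter

/-- `h(k_1,…,k_r) = −Σ_i (k_i²/2 − (t/2)·k_i·log_b k_i)`. -/
noncomputable def hfun (b : ℝ) (t : ℕ) {r : ℕ} (k : Fin r → ℕ) : ℝ :=
  -∑ i, ((k i : ℝ) ^ 2 / 2 - (t : ℝ) / 2 * (k i : ℝ) * Real.logb b (k i))

open Finset Real

theorem Real.eventually_mul_log_add_le (c d : ℝ) : ∀ᶠ x : ℝ in atTop, c * log x + d ≤ x := by
  have h : (fun x => c * log x + d) =o[atTop] id :=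
    (isLittleO_log_id_atTop.const_mul_left c).add (Asymptotics.isLittleO_const_id_atTop d)
  filter_upwards [h.eventuallyLE, eventually_ge_atTop 0] with x hx hx0
  simpa [abs_of_nonneg hx0] using (le_abs_self _).trans hx

theorem le_add_fwdDiff_mul_sub {f : ℕ → ℝ} {a : ℕ}
    (hf : ∀ j, 1 ≤ j → j < a → fwdDiff 1 f a ≤ fwdDiff 1 f j) {k : ℕ} (hk : 1 ≤ k)
    (hka : k ≤ a + 1) : f k ≤ f a + fwdDiff 1 f a * (k - a) := by
  rcases (show k = a + 1 ∨ k ≤ a by omega) with rfl | hka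
  · simp [fwdDiff]
  have hsum : (a - k : ℕ) • fwdDiff 1 f a ≤ f a - f k := by
    rw [← sum_Ico_sub (f := f) hka, ← Nat.card_Ico]
    exact card_nsmul_le_sum _ _ _ fun j hj => by
      rw [mem_Ico] at hj
      exact hf j (hk.trans hj.1) hj.2
  rw [nsmul_eq_mul, Nat.cast_sub hka] at hsum
  linarith

theorem eq_or_eq_succ_of_balanced {ι : Type*} [Fintype ι] {kb : ι → ℕ} {a : ℕ}
    (hbal : ∀ i j, kb i ≤ kb j + 1) (hle : ∀ i, kb i ≤ a + 1)
    (hsum : Fintype.card ι * a ≤ ∑ i, kb i) (i : ι) : kb i = a ∨ kb i = a + 1 := by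
  suffices a ≤ kb i by have := hle i; omega
  by_contra! hi
  have hlt : ∑ j, kb j < ∑ _j : ι, a :=
    sum_lt_sum (fun j _ => by have := hbal j i; omega) ⟨i, mem_univ i, hi⟩
  rw [sum_const, card_univ, smul_eq_mul] at hlt
  omega

theorem sum_le_sum_of_balanced {ι : Type*} [Fintype ι] {f : ℕ → ℝ} {a : ℕ}
    (hf : ∀ j, 1 ≤ j → j < a → fwdDiff 1 f a ≤ fwdDiff 1 f j) {k kb : ι → ℕ}
    (hk1 : ∀ i, 1 ≤ k i) (hka : ∀ i, k i ≤ a + 1) (hkb : ∀ i, kb i = a ∨ kb i = a + 1)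
    (hsum : ∑ i, k i = ∑ i, kb i) : ∑ i, f (k i) ≤ ∑ i, f (kb i) := by
  set line : ℕ → ℝ := fun m => f a + fwdDiff 1 f a * (m - a)
  have hline : ∀ i, f (kb i) = line (kb i) := fun i => by
    rcases hkb i with h | h <;> simp [h, line, fwdDiff]
  have hsumR : ∑ i, (k i : ℝ) = ∑ i, (kb i : ℝ) := by exact_mod_cast hsum
  calc ∑ i, f (k i) ≤ ∑ i, line (k i) :=
        sum_le_sum fun i _ => le_add_fwdDiff_mul_sub hf (hk1 i) (hka i)
    _ = ∑ i, line (kb i) := by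
        simp only [line, sum_add_distrib, ← mul_sum, sum_sub_distrib, hsumR]
    _ = ∑ i, f (kb i) := (sum_congr rfl fun i _ => hline i).symm

noncomputable def mulLogStep (x : ℝ) : ℝ := (x + 1) * log (x + 1) - x * log x

theorem log_succ_add_le_mulLogStep {x : ℝ} (hx : 0 < x) :
    log (x + 1) + (1 - (x + 1)⁻¹) ≤ mulLogStep x := by
  have h := one_sub_inv_le_log_of_pos (show 0 < (x + 1) / x by positivity)
  rw [log_div (by positivity) hx.ne', inv_div] at h
  have e : x * (1 - x / (x + 1)) = 1 - (x + 1)⁻¹ := by field_simp; ring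
  unfold mulLogStep
  nlinarith [mul_le_mul_of_nonneg_left h hx.le]

theorem mulLogStep_le_log_succ_add_one {x : ℝ} (hx : 0 < x) :
    mulLogStep x ≤ log (x + 1) + 1 := by
  have h := log_le_sub_one_of_pos (show 0 < (x + 1) / x by positivity)
  rw [log_div (by positivity) hx.ne'] at h
  have e : x * ((x + 1) / x - 1) = 1 := by field_simp; ring
  unfold mulLogStep
  nlinarith [mul_le_mul_of_nonneg_left h hx.le]

theorem mul_mulLogStep_sub_le {c x y : ℝ} (hc : 0 ≤ c) (hy : 1 ≤ y) (hyx : y + 1 ≤ x)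
    (hx : c * (log (x + 1) + 1) + 2 * c ≤ x) : c * (mulLogStep x - mulLogStep y) ≤ x - y := by
  have hy0 : 0 < y := by linarith
  have hx0 : 0 < x := by linarith
  have hdiff : mulLogStep x - mulLogStep y ≤ log (x + 1) - log (y + 1) + (y + 1)⁻¹ := by
    linarith [mulLogStep_le_log_succ_add_one hx0, log_succ_add_le_mulLogStep hy0]
  rcases le_or_gt (2 * c) (y + 1) with hcy | hcy
  · have hlog := log_le_sub_one_of_pos (show 0 < (x + 1) / (y + 1) by positivity)
    rw [log_div (by positivity) (by positivity)] at hlog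
    have hdiff' : mulLogStep x - mulLogStep y ≤ 2 * (x - y) / (y + 1) := by
      have e : (x + 1) / (y + 1) - 1 + (y + 1)⁻¹ = (x - y + 1) / (y + 1) := by
        field_simp; ring
      have : (x - y + 1) / (y + 1) ≤ 2 * (x - y) / (y + 1) := by
        gcongr; linarith
      linarith
    calc c * (mulLogStep x - mulLogStep y) ≤ c * (2 * (x - y) / (y + 1)) := by gcongr
      _ = 2 * c * (x - y) / (y + 1) := by ring
      _ ≤ (y + 1) * (x - y) / (y + 1) := by gcongr; linarith
      _ = x - y := by field_simp
  · have hlog : 0 ≤ log (y + 1) := log_nonneg (by linarith)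
    have hinv : (y + 1)⁻¹ ≤ 1 := inv_le_one_of_one_le₀ (by linarith)
    have : c * (mulLogStep x - mulLogStep y) ≤ c * (log (x + 1) + 1) := by
      gcongr; linarith
    linarith

noncomputable def hSummand (b : ℝ) (t : ℕ) (k : ℕ) : ℝ :=
  (t : ℝ) / 2 * k * logb b k - (k : ℝ) ^ 2 / 2

theorem hfun_eq_sum_hSummand (b : ℝ) (t : ℕ) {r : ℕ} (k : Fin r → ℕ) :
    hfun b t k = ∑ i, hSummand b t (k i) := by
  rw [hfun, ← sum_neg_distrib]
  exact sum_congr rfl fun i _ => by rw [hSummand]; ring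

theorem fwdDiff_hSummand (b : ℝ) (t a : ℕ) :
    fwdDiff 1 (hSummand b t) a = t / (2 * log b) * mulLogStep a - (a + 1 / 2) := by
  simp only [fwdDiff, hSummand, mulLogStep, logb]
  push_cast
  ring

theorem eventually_fwdDiff_hSummand_le {b : ℝ} (hb : 1 < b) (t : ℕ) :
    ∀ᶠ a : ℕ in atTop, ∀ j, 1 ≤ j → j < a →
      fwdDiff 1 (hSummand b t) a ≤ fwdDiff 1 (hSummand b t) j := by
  set c : ℝ := t / (2 * log b)
  have hc : 0 ≤ c := by have := log_pos hb; positivity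
  have hsucc : Tendsto (fun a : ℕ => (a : ℝ) + 1) atTop atTop :=
    tendsto_atTop_add_const_right _ 1 tendsto_natCast_atTop_atTop
  filter_upwards [hsucc.eventually (eventually_mul_log_add_le c (3 * c + 1))]
    with a ha j hj hja
  have hj' : (1 : ℝ) ≤ j := by exact_mod_cast hj
  have hja' : (j : ℝ) + 1 ≤ a := by exact_mod_cast hja
  have := mul_mulLogStep_sub_le hc hj' hja' (by linarith)
  rw [fwdDiff_hSummand, fwdDiff_hSummand]
  linarith

theorem tendsto_atTop_of_natCast_eq_logb {b : ℝ} (hb : 1 < b) {t : ℕ} {C : ℕ → ℝ} {M : ℝ}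
    (hM : ∀ n, C n ≤ M) {a : ℕ → ℕ}
    (ha : ∀ n, (a n : ℝ) = 2 * logb b n + ((t : ℝ) - 2) * logb b (logb b n) - C n) :
    Tendsto a atTop atTop := by
  have hL : Tendsto (fun n : ℕ => logb b n) atTop atTop :=
    (tendsto_logb_atTop hb).comp tendsto_natCast_atTop_atTop
  have hlogb : ∀ᶠ y : ℝ in atTop, 0 ≤ logb b y ∧ 2 * logb b y ≤ y := by
    filter_upwards [eventually_ge_atTop 1, eventually_mul_log_add_le (2 / log b) 0] with y hy h
    refine ⟨logb_nonneg hb hy, ?_⟩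
    rw [logb]
    linarith [show 2 * (log y / log b) = 2 / log b * log y by ring]
  refine tendsto_natCast_atTop_iff.mp
    (tendsto_atTop_mono' _ ?_ (tendsto_atTop_add_const_right _ (-M) hL))
  filter_upwards [hL.eventually hlogb] with n ⟨h0, h2⟩
  rw [ha n]
  nlinarith [hM n, mul_nonneg (Nat.cast_nonneg t : (0 : ℝ) ≤ t) h0]

theorem stmt17 (b : ℝ) (hb : 1 < b) (t : ℕ) (C : ℕ → ℝ)
    (hC : ∃ M : ℝ, ∀ n : ℕ, |C n| ≤ M)
    (a : ℕ → ℕ)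
    (ha : ∀ n : ℕ, 0 < a n ∧
      (a n : ℝ) = 2 * Real.logb b n
        + ((t : ℝ) - 2) * Real.logb b (Real.logb b n) - C n) :
    ∀ᶠ n : ℕ in atTop,
      ∀ kb : Fin (n / a n) → ℕ,
        (∀ i, 1 ≤ kb i) → (∑ i, kb i = n) → (∀ i, kb i ≤ a n + 1) →
        (∀ i j, kb i ≤ kb j + 1) →
        ∀ k : Fin (n / a n) → ℕ,
          (∀ i, 1 ≤ k i) → (∑ i, k i = n) → (∀ i, k i ≤ a n + 1) →
          hfun b t k ≤ hfun b t kb := by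
  obtain ⟨M, hM⟩ := hC
  have ha_top := tendsto_atTop_of_natCast_eq_logb hb (fun n => (abs_le.mp (hM n)).2)
    (fun n => (ha n).2)
  filter_upwards [ha_top.eventually (eventually_fwdDiff_hSummand_le hb t)] with n hn
  intro kb _ hkb_sum hkb_le hkb_bal k hk_pos hk_sum hk_le
  have hkb : ∀ i, kb i = a n ∨ kb i = a n + 1 :=
    eq_or_eq_succ_of_balanced hkb_bal hkb_le
      (by simpa [hkb_sum] using Nat.div_mul_le_self n (a n))
  rw [hfun_eq_sum_hSummand, hfun_eq_sum_hSummand]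
  exact sum_le_sum_of_balanced hn hk_pos hk_le hkb (hk_sum.trans hkb_sum.symm)
end

section
/- Fix a real number b > 1 and an integer t ≥ 0, and let (C_n) be a bounded sequence of reals such that α_C(n) := 2 log_b n + (t−2) log_b log_b n − C_n is a positive integer, and set r := ⌊n/α_C(n)⌋. For an r-tuple (k_1,…,k_r) of positive integers define h(k_1,…,k_r) := −Σ_{i=1}^r ( k_i^2/2 − (t/2)·k_i·log_b k_i ). Then for all sufficiently large n: if k_1 ≤ k_2 ≤ … ≤ k_r are positive integers with Σ_i k_i = n, k_1 ≤ α_C(n), k_r ≥ α_C(n)+1, and k_1 < k_r − 1, then h(k_1+1, k_2, …, k_{r−1}, k_r−1) > h(k_1, k_2, …, k_r). -/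
/-!
Write `h = -∑ F(kᵢ)` with `F(x) = x²/2 - (t/2)·x·log_b x`. Moving one unit from the largest part
`B` to the smallest part `A` raises `h` by `(B - A - 1) - (t/2)·Δ/log b`, where
`Δ = [ψ(B) - ψ(B-1)] - [ψ(A+1) - ψ(A)]` and `ψ(x) = x log x`. By `log y ≤ y - 1`,
`Δ ≤ log (B/(A+1)) + 1/(A+1)`. If `t ≤ A log b` this is at most `(B - A)/(A+1)`, so
`(t/2)·Δ/log b < (B - A)/2 ≤ B - A - 1` as `B - A ≥ 2`. Otherwise `A < t/log b`, `Δ ≤ log B + 1/2`,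
and the gain, about `B`, beats `(t/2)·log_b B` once `B` is large; `B > α_C(n) → ∞` makes this
hold for all large `n`.
-/

open Filter

open Real

noncomputable def hfunTerm (b t x : ℝ) : ℝ :=
  x ^ 2 / 2 - t / 2 * x * logb b x

lemma hfun_eq_neg_sum_hfunTerm (b : ℝ) (t : ℕ) {r : ℕ} (k : Fin r → ℕ) :
    hfun b t k = -∑ i, hfunTerm b t (k i) := rfl

lemma Finset.sum_comp_update {ι α M : Type*} [Fintype ι] [DecidableEq ι] [AddCommGroup M]
    (F : α → M) (g : ι → α) (i : ι) (v : α) :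
    ∑ x, F (Function.update g i v x) = ∑ x, F (g x) - F (g i) + F v := by
  have hi := Finset.mem_univ i
  rw [← Function.comp_def F, Function.comp_update, Finset.sum_update_of_mem hi,
    Finset.sdiff_singleton_eq_erase, Finset.sum_erase_eq_sub hi]
  simp only [Function.comp_apply]
  abel

lemma hfun_update_update (b : ℝ) (t : ℕ) {r : ℕ} (k : Fin r → ℕ) {i j : Fin r} (hij : i ≠ j)
    (u v : ℕ) :
    hfun b t (Function.update (Function.update k i u) j v) =
      hfun b t k + hfunTerm b t (k i) + hfunTerm b t (k j)
        - hfunTerm b t u - hfunTerm b t v := by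
  simp only [hfun_eq_neg_sum_hfunTerm, Finset.sum_comp_update (fun m : ℕ => hfunTerm b t m),
    Function.update_of_ne hij.symm]
  ring

lemma mul_log_sub_mul_log_sub_one_le {x : ℝ} (hx : 1 < x) :
    x * log x - (x - 1) * log (x - 1) ≤ log x + 1 := by
  have hx1 : 0 < x - 1 := by linarith
  have h := log_le_sub_one_of_pos (div_pos (by linarith) hx1 : 0 < x / (x - 1))
  rw [log_div (by linarith) hx1.ne', div_sub_one hx1.ne', sub_sub_cancel, le_div_iff₀ hx1] at h
  linarith

lemma log_add_div_le_mul_log_add_one_sub {x : ℝ} (hx : 0 < x) :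
    log (x + 1) + x / (x + 1) ≤ (x + 1) * log (x + 1) - x * log x := by
  have hx1 : 0 < x + 1 := by linarith
  have h := one_sub_inv_le_log_of_pos (div_pos hx1 hx)
  rw [log_div hx1.ne' hx.ne', inv_div, one_sub_div hx1.ne', add_sub_cancel_left] at h
  have h' := mul_le_mul_of_nonneg_left h hx.le
  rw [mul_one_div] at h'
  linarith

lemma mul_log_second_difference_lt {L t A B : ℝ} (hL : 0 < L) (ht : 0 ≤ t) (hA : 1 ≤ A)
    (hAB : A + 2 ≤ B) (hB : t / 2 * log B + 5 / 4 * t + L < B * L) :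
    t / 2 * ((B * log B - (B - 1) * log (B - 1)) - ((A + 1) * log (A + 1) - A * log A))
      < (B - A - 1) * L := by
  have hA1 : 0 < A + 1 := by linarith
  have hΔ : (B * log B - (B - 1) * log (B - 1)) - ((A + 1) * log (A + 1) - A * log A)
      ≤ log B - log (A + 1) + 1 / (A + 1) := by
    have h1 := mul_log_sub_mul_log_sub_one_le (by linarith : 1 < B)
    have h2 := log_add_div_le_mul_log_add_one_sub (by linarith : 0 < A)
    have : A / (A + 1) = 1 - 1 / (A + 1) := by field_simp; ring
    linarith
  refine lt_of_le_of_lt (mul_le_mul_of_nonneg_left hΔ (by positivity)) ?_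
  rcases le_or_gt t (A * L) with htA | htA
  · have hlog : log B - log (A + 1) ≤ (B - (A + 1)) / (A + 1) := by
      have h := log_le_sub_one_of_pos (div_pos (by linarith) hA1 : 0 < B / (A + 1))
      rwa [log_div (by linarith) hA1.ne', div_sub_one hA1.ne'] at h
    have hsum : (B - (A + 1)) / (A + 1) + 1 / (A + 1) = (B - A) / (A + 1) := by
      rw [← add_div]; ring_nf
    calc t / 2 * (log B - log (A + 1) + 1 / (A + 1))
        ≤ t / 2 * ((B - A) / (A + 1)) := by gcongr; linarith
      _ ≤ A * L / 2 * ((B - A) / (A + 1)) :=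
          mul_le_mul_of_nonneg_right (by linarith) (div_nonneg (by linarith) hA1.le)
      _ < L / 2 * (B - A) := by
          rw [mul_div_assoc', div_lt_iff₀ hA1]
          nlinarith [mul_pos hL (by linarith : 0 < B - A)]
      _ ≤ (B - A - 1) * L := by nlinarith
  · have hlogA : 0 ≤ log (A + 1) := log_nonneg (by linarith)
    have hinv : 1 / (A + 1) ≤ 1 / 2 := by gcongr; linarith
    calc t / 2 * (log B - log (A + 1) + 1 / (A + 1))
        ≤ t / 2 * (log B + 1 / 2) := by gcongr; linarith
      _ < (B - A - 1) * L := by linarith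

lemma hfunTerm_add_one_add_hfunTerm_sub_one_lt {b t A B : ℝ} (hb : 1 < b) (ht : 0 ≤ t)
    (hA : 1 ≤ A) (hAB : A + 2 ≤ B) (hB : t / 2 * log B + 5 / 4 * t + log b < B * log b) :
    hfunTerm b t (A + 1) + hfunTerm b t (B - 1) < hfunTerm b t A + hfunTerm b t B := by
  have hL := log_pos hb
  have key := mul_log_second_difference_lt hL ht hA hAB hB
  have expand : hfunTerm b t A + hfunTerm b t B - (hfunTerm b t (A + 1) + hfunTerm b t (B - 1))
      = (B - A - 1) - t / 2 * ((B * log B - (B - 1) * log (B - 1))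
          - ((A + 1) * log (A + 1) - A * log A)) / log b := by
    simp only [hfunTerm, logb]
    field_simp
    ring
  have : t / 2 * ((B * log B - (B - 1) * log (B - 1))
      - ((A + 1) * log (A + 1) - A * log A)) / log b < B - A - 1 := by
    rwa [div_lt_iff₀ hL]
  linarith

lemma tendsto_const_mul_sub_mul_log_atTop {c : ℝ} (hc : 0 < c) (d : ℝ) :
    Tendsto (fun x => c * x - d * log x) atTop atTop := by
  have hlog : (fun x => d * log x) =o[atTop] fun x => c * x :=
    (isLittleO_log_id_atTop.const_mul_left d).const_mul_right hc.ne'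
  exact (Asymptotics.IsEquivalent.refl.sub_isLittleO hlog).symm.tendsto_atTop
    (tendsto_id.const_mul_atTop hc)

lemma tendsto_two_logb_add_mul_logb_logb_sub_atTop {b t : ℝ} (hb : 1 < b) (ht : 0 ≤ t)
    {C : ℕ → ℝ} (hC : ∃ M, ∀ n, |C n| ≤ M) :
    Tendsto (fun n : ℕ => 2 * logb b n + (t - 2) * logb b (logb b n) - C n) atTop atTop := by
  obtain ⟨M, hM⟩ := hC
  have hlogb : Tendsto (fun n : ℕ => logb b n) atTop atTop :=
    (tendsto_logb_atTop hb).comp tendsto_natCast_atTop_atTop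
  have hlower := tendsto_atTop_add_const_right _ (-M)
    ((tendsto_const_mul_sub_mul_log_atTop two_pos (2 / log b)).comp hlogb)
  refine tendsto_atTop_mono' _ ?_ hlower
  filter_upwards [hlogb.eventually_ge_atTop 1] with n hn
  have hll : 0 ≤ logb b (logb b n) := logb_nonneg hb hn
  have hCn := (abs_le.mp (hM n)).2
  have : ∀ y, 2 / log b * log y = 2 * logb b y := fun y => by rw [logb]; ring
  simp only [Function.comp_apply, this]
  nlinarith

theorem stmt18 (b : ℝ) (hb : 1 < b) (t : ℕ) (C : ℕ → ℝ)
    (hC : ∃ M : ℝ, ∀ n : ℕ, |C n| ≤ M)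
    (a : ℕ → ℕ)
    (ha : ∀ n : ℕ, 0 < a n ∧
      (a n : ℝ) = 2 * Real.logb b n
        + ((t : ℝ) - 2) * Real.logb b (Real.logb b n) - C n) :
    ∀ᶠ n : ℕ in atTop,
      ∀ (hr : 0 < n / a n) (k : Fin (n / a n) → ℕ),
        Monotone k → (∀ i, 1 ≤ k i) → (∑ i, k i = n) →
        k ⟨0, hr⟩ ≤ a n → a n + 1 ≤ k ⟨n / a n - 1, Nat.sub_lt hr one_pos⟩ →
        k ⟨0, hr⟩ + 1 < k ⟨n / a n - 1, Nat.sub_lt hr one_pos⟩ →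
        hfun b t k <
          hfun b t (Function.update
            (Function.update k ⟨0, hr⟩ (k ⟨0, hr⟩ + 1))
            ⟨n / a n - 1, Nat.sub_lt hr one_pos⟩
            (k ⟨n / a n - 1, Nat.sub_lt hr one_pos⟩ - 1)) := by
  have ht : (0 : ℝ) ≤ t := t.cast_nonneg
  have ha_tendsto : Tendsto (fun n => (a n : ℝ)) atTop atTop := by
    simpa only [fun n => (ha n).2] using tendsto_two_logb_add_mul_logb_logb_sub_atTop hb ht hC
  have hlarge : ∀ᶠ x : ℝ in atTop, ∀ B ≥ x, t / 2 * log B + 5 / 4 * t + log b < B * log b :=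
    eventually_forall_ge_atTop.2 <| by
      filter_upwards [(tendsto_const_mul_sub_mul_log_atTop (log_pos hb) (t / 2)).eventually_gt_atTop
        (5 / 4 * t + log b)] with B hB
      linarith [mul_comm B (log b)]
  filter_upwards [ha_tendsto.eventually hlarge] with n hn
  intro hr k _ hpos _ _ hB hAB
  set i₀ : Fin (n / a n) := ⟨0, hr⟩
  set i₁ : Fin (n / a n) := ⟨n / a n - 1, Nat.sub_lt hr one_pos⟩
  have hi : i₀ ≠ i₁ := fun h => by rw [h] at hAB; omega
  have hmove := hfunTerm_add_one_add_hfunTerm_sub_one_lt hb ht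
    (by exact_mod_cast hpos i₀ : (1 : ℝ) ≤ k i₀) (by exact_mod_cast hAB : (k i₀ : ℝ) + 2 ≤ k i₁)
    (hn _ (by exact_mod_cast (Nat.le_of_succ_le hB : a n ≤ k i₁)))
  rw [hfun_update_update b t k hi, Nat.cast_sub (by omega : 1 ≤ k i₁)]
  push_cast
  linarith
end
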